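/- arXiv:1706.07505 — 2 statements merged into one kernel-verified Lean document; each statement's English description precedes it below -/
import Mathlib

section
/- Define H(t₀) = (1/2)·∫_{t₀}^{1} [1 - (1+t₀)/√(2(1+t)² - (1+t₀)²)] dt for 0 < t₀ < 1. Then H(t₀) > 0 for every t₀ ∈ (0, 1). -/
theorem stmt4 (t₀ : ℝ) (h : t₀ ∈ Set.Ioo (0:ℝ) 1) :
    0 < (1/2) * ∫ t in t₀..1,
      (1 - (1 + t₀) / Real.sqrt (2 * (1 + t) ^ 2 - (1 + t₀) ^ 2)) := by
  obtain ⟨h0, h1⟩ := h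
  have hpos : 0 < (1:ℝ)/2 := by norm_num
  refine mul_pos hpos ?_
  have key : ∀ t ∈ Set.Icc t₀ 1, 0 < 2 * (1 + t) ^ 2 - (1 + t₀) ^ 2 := by
    intro t ht
    have h1t : 1 + t₀ ≤ 1 + t := by linarith [ht.1]
    have : (1 + t₀) ^ 2 ≤ (1 + t) ^ 2 := by nlinarith
    nlinarith
  have hcont : ContinuousOn
      (fun t => 1 - (1 + t₀) / Real.sqrt (2 * (1 + t) ^ 2 - (1 + t₀) ^ 2))
      (Set.Icc t₀ 1) := by
    apply ContinuousOn.sub continuousOn_const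
    apply ContinuousOn.div continuousOn_const
    · exact (Real.continuous_sqrt.comp (by continuity)).continuousOn
    · intro t ht
      exact ne_of_gt (Real.sqrt_pos.2 (key t ht))
  apply intervalIntegral.intervalIntegral_pos_of_pos_on
  · exact (hcont.intervalIntegrable_of_Icc h1.le)
  · intro t ht
    have hx : 0 < 2 * (1 + t) ^ 2 - (1 + t₀) ^ 2 := key t ⟨ht.1.le, ht.2.le⟩
    have hlt : (1 + t₀) ^ 2 < 2 * (1 + t) ^ 2 - (1 + t₀) ^ 2 := by nlinarith [ht.1, h0]
    have hs : 1 + t₀ < Real.sqrt (2 * (1 + t) ^ 2 - (1 + t₀) ^ 2) := by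
      have := Real.sqrt_lt_sqrt (by positivity) hlt
      rwa [Real.sqrt_sq (by linarith : (0:ℝ) ≤ 1 + t₀)] at this
    have hdiv : (1 + t₀) / Real.sqrt (2 * (1 + t) ^ 2 - (1 + t₀) ^ 2) < 1 := by
      rw [div_lt_one (by linarith)]
      exact hs
    linarith
  · exact h1
end

section
/- In the unit disk with weight w(x,y) = 0.75 - 0.5(|x|+|y|) on {|x|+|y| < 0.5}, w(x,y) = |x|+|y| on {0.5 ≤ |x|+|y| ≤ 1}, and w = 1 elsewhere: the weighted length of the straight segment from (-0.5, 0) to (0.5, 0) equals 5/8, while the weighted length of the concatenation of segments from (-0.5,0) to (0, 0.2) and from (0, 0.2) to (0.5, 0) equals 0.575·√1.16, and 0.575·√1.16 < 5/8. -/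
/- All three paths stay in the closed inner diamond `|x| + |y| ≤ 1/2`, where the weight is
`3/4 - (|x| + |y|)/2` (on its boundary both branches equal `1/2`). Along each path `|x| + |y|`
is piecewise affine in `t`, so every weighted length is an integral of an affine function. -/

noncomputable def w7 (p : ℝ × ℝ) : ℝ :=
  if |p.1| + |p.2| < 0.5 then 0.75 - 0.5 * (|p.1| + |p.2|)
  else if |p.1| + |p.2| ≤ 1 then |p.1| + |p.2| else 1

open Set intervalIntegral

theorem w7_eq_of_abs_add_abs_le_half {p : ℝ × ℝ} (hp : |p.1| + |p.2| ≤ 1 / 2) :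
    w7 p = 3 / 4 - (|p.1| + |p.2|) / 2 := by
  unfold w7
  split_ifs <;> norm_num at * <;> linarith

theorem integral_const_add_mul (c d a b : ℝ) :
    ∫ t in a..b, (c + d * t) = c * (b - a) + d * (b ^ 2 - a ^ 2) / 2 := by
  rw [integral_add intervalIntegrable_const (intervalIntegrable_id.const_mul d),
    integral_const_mul, integral_const, integral_id, smul_eq_mul]
  ring

theorem integral_abs_sub {a b c : ℝ} (hac : a ≤ c) (hcb : c ≤ b) :
    ∫ t in a..b, |t - c| = ((c - a) ^ 2 + (b - c) ^ 2) / 2 := by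
  have integrable : ∀ x y : ℝ, IntervalIntegrable (fun t => |t - c|) MeasureTheory.volume x y :=
    fun x y => (continuous_abs.comp (continuous_sub_right c)).intervalIntegrable x y
  have left : ∫ t in a..c, |t - c| = ∫ t in a..c, (c + (-1) * t) :=
    integral_congr fun t ht => by
      rw [uIcc_of_le hac] at ht
      rw [abs_of_nonpos (by linarith [ht.2])]
      ring
  have right : ∫ t in c..b, |t - c| = ∫ t in c..b, (-c + 1 * t) :=
    integral_congr fun t ht => by
      rw [uIcc_of_le hcb] at ht
      rw [abs_of_nonneg (by linarith [ht.1])]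
      ring
  rw [← integral_add_adjacent_intervals (integrable a c) (integrable c b), left, right,
    integral_const_add_mul, integral_const_add_mul]
  ring

theorem integral_w7_segment : ∫ t in (0 : ℝ)..1, w7 (-(1 / 2) + t, 0) = 5 / 8 := by
  have on_path : EqOn (fun t : ℝ => w7 (-(1 / 2) + t, 0)) (fun t => 3 / 4 - |t - 1 / 2| / 2)
      (uIcc 0 1) := fun t ht => by
    rw [uIcc_of_le zero_le_one] at ht
    have hx : |-(1 / 2) + t| = |t - 1 / 2| := by ring_nf
    have hle : |t - 1 / 2| ≤ 1 / 2 := abs_le.2 ⟨by linarith [ht.1], by linarith [ht.2]⟩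
    simp only
    rw [w7_eq_of_abs_add_abs_le_half (by rwa [abs_zero, add_zero, hx]), abs_zero, add_zero, hx]
  have hint : IntervalIntegrable (fun t : ℝ => |t - 1 / 2| / 2) MeasureTheory.volume 0 1 :=
    ((continuous_abs.comp (continuous_sub_right _)).div_const 2).intervalIntegrable 0 1
  rw [integral_congr on_path, integral_sub intervalIntegrable_const hint, integral_const,
    integral_div, integral_abs_sub (by norm_num) (by norm_num)]
  norm_num

theorem integral_w7_left_leg : ∫ t in (0 : ℝ)..1, w7 (-(1 / 2) + t / 2, t / 5) = 23 / 40 := by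
  have on_path : EqOn (fun t : ℝ => w7 (-(1 / 2) + t / 2, t / 5)) (fun t => 1 / 2 + 3 / 20 * t)
      (uIcc 0 1) := fun t ht => by
    rw [uIcc_of_le zero_le_one] at ht
    have hx : |-(1 / 2) + t / 2| = 1 / 2 - t / 2 := by
      rw [abs_of_nonpos (by linarith [ht.2])]; ring
    have hy : |t / 5| = t / 5 := abs_of_nonneg (by linarith [ht.1])
    simp only
    rw [w7_eq_of_abs_add_abs_le_half (by simp only [hx, hy]; linarith [ht.1]), hx, hy]
    ring
  rw [integral_congr on_path, integral_const_add_mul]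
  norm_num

theorem integral_w7_right_leg : ∫ t in (0 : ℝ)..1, w7 (t / 2, 1 / 5 - t / 5) = 23 / 40 := by
  have on_path : EqOn (fun t : ℝ => w7 (t / 2, 1 / 5 - t / 5)) (fun t => 13 / 20 + (-3 / 20) * t)
      (uIcc 0 1) := fun t ht => by
    rw [uIcc_of_le zero_le_one] at ht
    have hx : |t / 2| = t / 2 := abs_of_nonneg (by linarith [ht.1])
    have hy : |1 / 5 - t / 5| = 1 / 5 - t / 5 := abs_of_nonneg (by linarith [ht.2])
    simp only
    rw [w7_eq_of_abs_add_abs_le_half (by simp only [hx, hy]; linarith [ht.2]), hx, hy]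
    ring
  rw [integral_congr on_path, integral_const_add_mul]
  norm_num

theorem sqrt_one_point_one_six : Real.sqrt 1.16 = 2 * Real.sqrt 0.29 := by
  rw [show (1.16 : ℝ) = 2 ^ 2 * 0.29 by norm_num, Real.sqrt_mul (by positivity),
    Real.sqrt_sq zero_le_two]

theorem stmt7 :
    (∫ t in (0:ℝ)..1, w7 (-(1/2) + t, 0)) = 5/8 ∧
    ((∫ t in (0:ℝ)..1, Real.sqrt 0.29 * w7 (-(1/2) + t/2, t/5)) +
      (∫ t in (0:ℝ)..1, Real.sqrt 0.29 * w7 (t/2, 1/5 - t/5)) = 0.575 * Real.sqrt 1.16) ∧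
    0.575 * Real.sqrt 1.16 < 5/8 := by
  refine ⟨integral_w7_segment, ?_, ?_⟩
  · rw [integral_const_mul, integral_const_mul, integral_w7_left_leg, integral_w7_right_leg,
      sqrt_one_point_one_six]
    ring
  · -- `25 / 23 = (5 / 8) / 0.575`
    have : Real.sqrt 1.16 < 25 / 23 := (Real.sqrt_lt' (by norm_num)).2 (by norm_num)
    linarith
end
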